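/- The Jacobian of the cyclic vector field at (1/3,1/3,1/3), computed in the coordinates (x_1,x_2) with x_3 = 1 − x_1 − x_2, is the 2×2 matrix [[β/2 − 1, β/2], [−β/2, −1]], whose eigenvalues are (β/4 − 1) ± i·(√3·β)/4. -/

import Mathlib

noncomputable def G₁ (β x₁ x₂ : ℝ) : ℝ :=
  (x₁ ^ β + x₂ ^ β) / (2 * (x₁ ^ β + x₂ ^ β + (1 - x₁ - x₂) ^ β)) - x₁

noncomputable def G₂ (β x₁ x₂ : ℝ) : ℝ :=
  (x₂ ^ β + (1 - x₁ - x₂) ^ β) / (2 * (x₁ ^ β + x₂ ^ β + (1 - x₁ - x₂) ^ β)) - x₂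

/-!
Write `φ t = t ^ β`, `a = φ (1/3)` and `d = φ' (1/3)`. Moving one coordinate of the barycenter
moves `x₃` by the opposite amount, so the normalisation `S = φ x₁ + φ x₂ + φ x₃` is stationary
there and each partial derivative of `(φ xᵢ + φ xⱼ) / (2 S)` is `(±d or 0) / (6 a)`.
Since `d / a = 3 β`, this ratio is `β / 2`. The eigenvalues are the roots of the characteristic
polynomial `μ² - (β/2 - 2) μ + (1 - β/2 + β²/4)`, whose discriminant is `-3 β² / 4`.
-/

noncomputable def cyclicField₁ (φ : ℝ → ℝ) (x₁ x₂ : ℝ) : ℝ :=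
  (φ x₁ + φ x₂) / (2 * (φ x₁ + φ x₂ + φ (1 - x₁ - x₂))) - x₁

noncomputable def cyclicField₂ (φ : ℝ → ℝ) (x₁ x₂ : ℝ) : ℝ :=
  (φ x₂ + φ (1 - x₁ - x₂)) / (2 * (φ x₁ + φ x₂ + φ (1 - x₁ - x₂))) - x₂

theorem G₁_eq_cyclicField₁ (β : ℝ) : G₁ β = cyclicField₁ (· ^ β) := rfl

theorem G₂_eq_cyclicField₂ (β : ℝ) : G₂ β = cyclicField₂ (· ^ β) := rfl

theorem HasDerivAt.div_of_hasDerivAt_zero {f g : ℝ → ℝ} {f' x : ℝ} (hf : HasDerivAt f f' x)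
    (hg : HasDerivAt g 0 x) (hgx : g x ≠ 0) :
    HasDerivAt (fun t => f t / g t) (f' / g x) x := by
  refine (hf.div hg hgx).congr_deriv ?_
  rw [mul_zero, sub_zero, sq, mul_div_mul_right _ _ hgx]

namespace CyclicField

variable {φ : ℝ → ℝ} {d : ℝ}

theorem hasDerivAt_comp_one_sub_sub_third (hφ : HasDerivAt φ d (1/3)) :
    HasDerivAt (fun t => φ (1 - t - 1/3)) (-d) (1/3) := by
  have hlin : HasDerivAt (fun t : ℝ => 1 - t - 1/3) (-1) (1/3) := by
    simpa using ((hasDerivAt_id (1/3 : ℝ)).const_sub 1).sub_const (1/3 : ℝ)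
  exact (hφ.comp_of_eq (1/3) hlin (by norm_num)).congr_deriv (mul_neg_one d)

theorem hasDerivAt_comp_one_sub_third_sub (hφ : HasDerivAt φ d (1/3)) :
    HasDerivAt (fun t => φ (1 - 1/3 - t)) (-d) (1/3) := by
  have hlin : HasDerivAt (fun t : ℝ => 1 - 1/3 - t) (-1) (1/3) := by
    simpa using (hasDerivAt_id (1/3 : ℝ)).const_sub (1 - 1/3 : ℝ)
  exact (hφ.comp_of_eq (1/3) hlin (by norm_num)).congr_deriv (mul_neg_one d)

theorem hasDerivAt_denom_left (hφ : HasDerivAt φ d (1/3)) :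
    HasDerivAt (fun t => 2 * (φ t + φ (1/3) + φ (1 - t - 1/3))) 0 (1/3) := by
  simpa using ((hφ.add_const (φ (1/3))).add (hasDerivAt_comp_one_sub_sub_third hφ)).const_mul 2

theorem hasDerivAt_denom_right (hφ : HasDerivAt φ d (1/3)) :
    HasDerivAt (fun t => 2 * (φ (1/3) + φ t + φ (1 - 1/3 - t))) 0 (1/3) := by
  simpa using ((hφ.const_add (φ (1/3))).add (hasDerivAt_comp_one_sub_third_sub hφ)).const_mul 2

theorem one_sub_third_sub_third : (1 - 1/3 - 1/3 : ℝ) = 1/3 := by norm_num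

theorem denom_ne_zero (hφ₀ : φ (1/3) ≠ 0) :
    2 * (φ (1/3) + φ (1/3) + φ (1 - 1/3 - 1/3)) ≠ 0 := by
  rw [one_sub_third_sub_third]
  intro h
  exact hφ₀ (by linarith)

variable (hφ : HasDerivAt φ d (1/3)) (hφ₀ : φ (1/3) ≠ 0)
include hφ hφ₀

theorem hasDerivAt_field₁_left :
    HasDerivAt (fun t => cyclicField₁ φ t (1/3)) (d / (6 * φ (1/3)) - 1) (1/3) := by
  have h := ((hφ.add_const (φ (1/3))).div_of_hasDerivAt_zero (hasDerivAt_denom_left hφ)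
    (denom_ne_zero hφ₀)).sub (hasDerivAt_id (1/3 : ℝ))
  exact h.congr_deriv (by rw [one_sub_third_sub_third]; ring)

theorem hasDerivAt_field₁_right :
    HasDerivAt (fun t => cyclicField₁ φ (1/3) t) (d / (6 * φ (1/3))) (1/3) := by
  have h := ((hφ.const_add (φ (1/3))).div_of_hasDerivAt_zero (hasDerivAt_denom_right hφ)
    (denom_ne_zero hφ₀)).sub_const (1/3 : ℝ)
  exact h.congr_deriv (by rw [one_sub_third_sub_third]; ring)

theorem hasDerivAt_field₂_left :
    HasDerivAt (fun t => cyclicField₂ φ t (1/3)) (-(d / (6 * φ (1/3)))) (1/3) := by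
  have h := (((hasDerivAt_comp_one_sub_sub_third hφ).const_add (φ (1/3))).div_of_hasDerivAt_zero
    (hasDerivAt_denom_left hφ) (denom_ne_zero hφ₀)).sub_const (1/3 : ℝ)
  exact h.congr_deriv (by rw [one_sub_third_sub_third]; ring)

theorem hasDerivAt_field₂_right :
    HasDerivAt (fun t => cyclicField₂ φ (1/3) t) (-1) (1/3) := by
  have h := ((hφ.add (hasDerivAt_comp_one_sub_third_sub hφ)).div_of_hasDerivAt_zero
    (hasDerivAt_denom_right hφ) (denom_ne_zero hφ₀)).sub
    (hasDerivAt_id (1/3 : ℝ))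
  exact h.congr_deriv (by ring)

end CyclicField

theorem hasDerivAt_rpow_third (β : ℝ) :
    HasDerivAt (· ^ β) (3 * β * (1/3 : ℝ) ^ β) (1/3) := by
  convert Real.hasDerivAt_rpow_const (x := 1/3) (p := β) (Or.inl (by norm_num)) using 1
  rw [Real.rpow_sub (by norm_num), Real.rpow_one]
  field_simp

theorem Matrix.det_smul_one_sub_fin_two {R : Type*} [CommRing R] (μ a b c d : R) :
    (μ • (1 : Matrix (Fin 2) (Fin 2) R) - !![a, b; c, d]).det = (μ - a) * (μ - d) - b * c := by
  rw [Matrix.det_fin_two]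
  simp

theorem charpoly_eq_mul_sub_eigenvalues (β : ℝ) (μ : ℂ) :
    (μ - ((β : ℂ) / 2 - 1)) * (μ - -1) - (β : ℂ) / 2 * -((β : ℂ) / 2) =
      (μ - (((β : ℂ) / 4 - 1) + Complex.I * (Real.sqrt 3 * β / 4 : ℝ))) *
        (μ - (((β : ℂ) / 4 - 1) - Complex.I * (Real.sqrt 3 * β / 4 : ℝ))) := by
  have hsqrt : ((Real.sqrt 3 : ℝ) : ℂ) ^ 2 = 3 := by
    norm_cast
    exact Real.sq_sqrt (by norm_num)
  push_cast
  linear_combination ((Real.sqrt 3 : ℂ) ^ 2 * (β : ℂ) ^ 2 / 16) * Complex.I_sq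
    - ((β : ℂ) ^ 2 / 16) * hsqrt

theorem cyclic_jacobian_and_eigenvalues_general (β : ℝ) :
    deriv (fun t => G₁ β t (1/3)) (1/3) = β / 2 - 1 ∧
    deriv (fun t => G₁ β (1/3) t) (1/3) = β / 2 ∧
    deriv (fun t => G₂ β t (1/3)) (1/3) = -(β / 2) ∧
    deriv (fun t => G₂ β (1/3) t) (1/3) = -1 ∧
    (∀ μ : ℂ,
      Matrix.det (μ • (1 : Matrix (Fin 2) (Fin 2) ℂ) -
        Matrix.of ![![(β : ℂ) / 2 - 1, (β : ℂ) / 2], ![-((β : ℂ) / 2), -1]]) = 0 ↔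
      μ = ((β : ℂ) / 4 - 1) + Complex.I * (Real.sqrt 3 * β / 4 : ℝ) ∨
      μ = ((β : ℂ) / 4 - 1) - Complex.I * (Real.sqrt 3 * β / 4 : ℝ)) := by
  have hφ := hasDerivAt_rpow_third β
  have hφ₀ : (1/3 : ℝ) ^ β ≠ 0 := (Real.rpow_pos_of_pos (by norm_num) β).ne'
  have hratio : 3 * β * (1/3 : ℝ) ^ β / (6 * (1/3 : ℝ) ^ β) = β / 2 := by
    field_simp
    ring
  simp only [G₁_eq_cyclicField₁, G₂_eq_cyclicField₂]
  refine ⟨?_, ?_, ?_, (CyclicField.hasDerivAt_field₂_right hφ hφ₀).deriv, fun μ => ?_⟩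
  · rw [(CyclicField.hasDerivAt_field₁_left hφ hφ₀).deriv, hratio]
  · rw [(CyclicField.hasDerivAt_field₁_right hφ hφ₀).deriv, hratio]
  · rw [(CyclicField.hasDerivAt_field₂_left hφ hφ₀).deriv, hratio]
  rw [Matrix.det_smul_one_sub_fin_two, charpoly_eq_mul_sub_eigenvalues, mul_eq_zero, sub_eq_zero,
    sub_eq_zero]

theorem cyclic_jacobian_and_eigenvalues (β : ℝ) (hβ : 0 < β) :
    deriv (fun t => G₁ β t (1/3)) (1/3) = β / 2 - 1 ∧
    deriv (fun t => G₁ β (1/3) t) (1/3) = β / 2 ∧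
    deriv (fun t => G₂ β t (1/3)) (1/3) = -(β / 2) ∧
    deriv (fun t => G₂ β (1/3) t) (1/3) = -1 ∧
    (∀ μ : ℂ,
      Matrix.det (μ • (1 : Matrix (Fin 2) (Fin 2) ℂ) -
        Matrix.of ![![(β : ℂ) / 2 - 1, (β : ℂ) / 2], ![-((β : ℂ) / 2), -1]]) = 0 ↔
      μ = ((β : ℂ) / 4 - 1) + Complex.I * (Real.sqrt 3 * β / 4 : ℝ) ∨
      μ = ((β : ℂ) / 4 - 1) - Complex.I * (Real.sqrt 3 * β / 4 : ℝ)) :=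
  cyclic_jacobian_and_eigenvalues_general β
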